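/- Under Assumptions Q1, A1-i and A1-ii: (a) the map (x, π) ↦ H(x)[π] is lower semicontinuous on Δ^𝒜 × ℝ^𝒜; (b) H(x)[π] ≤ 0 for all x ∈ Δ^𝒜 and π ∈ ℝ^𝒜; (c) H(x)[π] = 0 if and only if every a ∈ 𝒜 with x_a > 0 satisfies π_a = max_{b∈𝒜} π_b. -/

import Mathlib

open MeasureTheory Finset
open scoped Classical

/-- The maximal payoff among actions in `S`. -/
noncomputable def piStar {A : Type*} (π : A → ℝ) (S : Finset A) : ℝ :=
  if h : S.Nonempty then S.sup' h π else 0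

/-- `Q(q) = μ_Q((-∞, q])`. -/
noncomputable def Qfun (μQ : Measure ℝ) (q : ℝ) : ℝ := (μQ (Set.Iic q)).toReal

/-- The individual ex-ante first-order net gain `g_{a*}[π]`. -/
noncomputable def gain {A : Type*} [Fintype A] [DecidableEq A]
    (P : A → Finset A → ℝ) (μQ : Measure ℝ) (π : A → ℝ) (a : A) : ℝ :=
  ∑ A' ∈ (Finset.univ.erase a).powerset,
    P a A' * ∫ q, max (piStar π A' - π a - q) 0 ∂μQ

/-- `g_{**}[π](S) = min_{b ∈ S} g_{b*}[π]`. -/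
noncomputable def gainMin {A : Type*} [Fintype A] [DecidableEq A]
    (P : A → Finset A → ℝ) (μQ : Measure ℝ) (π : A → ℝ) (S : Finset A) : ℝ :=
  if h : S.Nonempty then S.inf' h (fun b => gain P μQ π b) else 0

/-- The individual ex-ante second-order net gain `h_{a*}[π]`. -/
noncomputable def gain2 {A : Type*} [Fintype A] [DecidableEq A]
    (P : A → Finset A → ℝ) (μQ : Measure ℝ) (π : A → ℝ) (a : A) : ℝ :=
  ∑ A' ∈ (Finset.univ.erase a).powerset,
    P a A' * Qfun μQ (piStar π A' - π a) * (gainMin P μQ π A' - gain P μQ π a)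

/-- The aggregate second-order gain `H(x)[π] = Σ_a x_a h_{a*}[π]`. -/
noncomputable def Hagg {A : Type*} [Fintype A] [DecidableEq A]
    (P : A → Finset A → ℝ) (μQ : Measure ℝ) (x π : A → ℝ) : ℝ :=
  ∑ a : A, x a * gain2 P μQ π a


/-!
By the layer-cake formula, `gain P μQ π a` is the integral over `r > 0` of the `P a`-mass of the
offer sets that meet the level set `{c | r ≤ ∫ (π c - π a - q)⁺ dμQ}`. When `π b ≤ π a` this level
set avoids `a` and `b` and only grows when `a` is replaced by `b`, so Assumption A1-ii makes the
first-order gain antitone in the own payoff. An offer set is switched to with positive probability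
only if (by Q1) its best payoff is at least `π a`, and then its minimal gain is at most `gain a`:
every term of `h_{a*}` is `≤ 0`. At an optimal action `gain a = 0`, so `h_{a*} = 0`; otherwise
A1-i puts positive mass on a set containing an optimal action, whose gain is `0 < gain a`.
Lower semicontinuity holds because `Q` is a distribution function, hence upper semicontinuous,
and multiplies the continuous nonpositive factor `min (g_{**} - g_{a*}) 0`.
-/

open Topology

section Semicontinuity

variable {X : Type*} [TopologicalSpace X]

theorem Monotone.upperSemicontinuous_of_continuousWithinAt_Ici {α β : Type*} [LinearOrder α]
    [TopologicalSpace α] [OrderTopology α] [NoMaxOrder α] [Preorder β] [TopologicalSpace β]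
    [OrderTopology β] {f : α → β} (hf : Monotone f) (hr : ∀ x, ContinuousWithinAt f (Set.Ici x) x) :
    UpperSemicontinuous f := by
  intro x y hxy
  obtain ⟨u, hxu, hu⟩ := mem_nhdsGE_iff_exists_Ico_subset.1 ((hr x).eventually (gt_mem_nhds hxy))
  filter_upwards [Iio_mem_nhds hxu] with z hzu
  rcases le_total x z with hxz | hzx
  · exact hu ⟨hxz, hzu⟩
  · exact (hf hzx).trans_lt hxy

theorem lowerSemicontinuousOn_mul_of_nonneg_of_nonpos {f g : X → ℝ} {s : Set X}
    (hf : UpperSemicontinuousOn f s) (hg : LowerSemicontinuousOn g s)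
    (hf0 : ∀ x ∈ s, 0 ≤ f x) (hg0 : ∀ x ∈ s, g x ≤ 0) :
    LowerSemicontinuousOn (fun x => f x * g x) s := by
  intro x hx y hy
  have hlim : Filter.Tendsto (fun ε : ℝ => (f x + ε) * (g x - ε)) (𝓝[>] 0) (𝓝 (f x * g x)) := by
    apply tendsto_nhdsWithin_of_tendsto_nhds
    have hcont : Continuous fun ε : ℝ => (f x + ε) * (g x - ε) := by fun_prop
    simpa using hcont.tendsto 0
  obtain ⟨ε, hyε, hε⟩ := ((hlim.eventually (lt_mem_nhds hy)).and self_mem_nhdsWithin).exists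
  filter_upwards [hf x hx _ (lt_add_of_pos_right _ hε), hg x hx _ (sub_lt_self _ hε),
    self_mem_nhdsWithin] with z hfz hgz hz
  have hfε : 0 < f x + ε := add_pos_of_nonneg_of_pos (hf0 x hx) hε
  calc y < (f x + ε) * (g x - ε) := hyε
    _ ≤ (f x + ε) * g z := mul_le_mul_of_nonneg_left hgz.le hfε.le
    _ ≤ f z * g z := mul_le_mul_of_nonpos_right hfz.le (hg0 z hz)

end Semicontinuity

section Distribution

open ProbabilityTheory

variable {μ : Measure ℝ}

theorem Qfun_nonneg (q : ℝ) : 0 ≤ Qfun μ q := ENNReal.toReal_nonneg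

variable [IsProbabilityMeasure μ]

theorem Qfun_eq_cdf : Qfun μ = cdf μ := funext fun q => (cdf_eq_real μ q).symm

theorem upperSemicontinuous_Qfun : UpperSemicontinuous (Qfun μ) :=
  Qfun_eq_cdf (μ := μ) ▸ (monotone_cdf μ).upperSemicontinuous_of_continuousWithinAt_Ici
    (cdf μ).right_continuous

theorem ae_nonneg_of_Qfun_eq_zero (hQ : ∀ q < 0, Qfun μ q = 0) : ∀ᵐ q ∂μ, 0 ≤ q := by
  have hlim : Filter.Tendsto (cdf μ) (𝓝[<] 0) (𝓝 0) :=
    tendsto_const_nhds.congr' <| eventually_nhdsWithin_of_forall fun q hq =>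
      (Qfun_eq_cdf (μ := μ) ▸ hQ q hq).symm
  simp only [ae_iff, not_le]
  change μ (Set.Iio 0) = 0
  rw [← measure_cdf μ, StieltjesFunction.measure_Iio _ (tendsto_cdf_atBot μ),
    leftLim_eq_of_tendsto hlim]
  simp

end Distribution

section ExpectedPosPart

variable (μ : Measure ℝ)

noncomputable def expectedPosPart (v : ℝ) : ℝ := ∫ q, max (v - q) 0 ∂μ

theorem expectedPosPart_nonneg (v : ℝ) : 0 ≤ expectedPosPart μ v :=
  integral_nonneg fun _ => le_max_right _ _

variable {μ} (h0 : ∀ᵐ q ∂μ, 0 ≤ q)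
include h0

theorem expectedPosPart_eq_zero {v : ℝ} (hv : v ≤ 0) : expectedPosPart μ v = 0 := by
  refine (integral_congr_ae ?_).trans (integral_zero ℝ ℝ)
  filter_upwards [h0] with q hq
  exact max_eq_right (by linarith)

theorem pos_of_expectedPosPart_pos {v : ℝ} (h : 0 < expectedPosPart μ v) : 0 < v := by
  by_contra! hv
  exact h.ne' (expectedPosPart_eq_zero h0 hv)

variable [IsProbabilityMeasure μ]

theorem integrable_max_sub (v : ℝ) : Integrable (fun q => max (v - q) 0) μ := by
  refine Integrable.mono' (integrable_const (max v 0)) (by fun_prop) ?_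
  filter_upwards [h0] with q hq
  rw [Real.norm_of_nonneg (le_max_right _ _)]
  exact max_le_max (by linarith) le_rfl

theorem expectedPosPart_mono : Monotone (expectedPosPart μ) := fun v w hvw =>
  integral_mono (integrable_max_sub h0 v) (integrable_max_sub h0 w) fun q =>
    max_le_max (by linarith) le_rfl

theorem expectedPosPart_pos {v : ℝ} (hv : 0 < v) (hQ : 0 < Qfun μ (v / 2)) :
    0 < expectedPosPart μ v := by
  have hle : (Set.Iic (v / 2)).indicator (fun _ => v / 2) ≤ fun q => max (v - q) 0 := by
    intro q
    by_cases hq : q ∈ Set.Iic (v / 2)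
    · rw [Set.indicator_of_mem hq]
      exact le_max_of_le_left (by linarith [Set.mem_Iic.1 hq])
    · rw [Set.indicator_of_notMem hq]
      exact le_max_right _ _
  calc 0 < Qfun μ (v / 2) * (v / 2) := mul_pos hQ (half_pos hv)
    _ = ∫ q, (Set.Iic (v / 2)).indicator (fun _ => v / 2) q ∂μ := by
      rw [integral_indicator_const _ measurableSet_Iic, smul_eq_mul]; rfl
    _ ≤ expectedPosPart μ v :=
      integral_mono ((integrable_const _).indicator measurableSet_Iic)
        (integrable_max_sub h0 v) hle

theorem lipschitzWith_expectedPosPart : LipschitzWith 1 (expectedPosPart μ) := by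
  refine LipschitzWith.mk_one fun v w => ?_
  rw [Real.dist_eq, Real.dist_eq, expectedPosPart, expectedPosPart,
    ← integral_sub (integrable_max_sub h0 v) (integrable_max_sub h0 w)]
  simpa using norm_integral_le_of_norm_le_const (μ := μ) (C := |v - w|)
    (f := fun q => max (v - q) 0 - max (w - q) 0)
    (Filter.Eventually.of_forall fun q => by
      simpa using abs_max_sub_max_le_abs (v - q) (w - q) 0)

end ExpectedPosPart

section LayerCake

open Set

variable {ι κ : Type*}

theorem integrable_sum_indicator_Ioc (s : Finset ι) (w v : ι → ℝ) :
    Integrable fun r => ∑ i ∈ s, (Ioc 0 (v i)).indicator (fun _ => w i) r :=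
  integrable_finsetSum _ fun _ _ =>
    (integrableOn_const (by simp)).integrable_indicator measurableSet_Ioc

theorem sum_mul_eq_integral_sum_indicator_Ioc (s : Finset ι) (w : ι → ℝ) {v : ι → ℝ}
    (hv : ∀ i ∈ s, 0 ≤ v i) :
    ∑ i ∈ s, w i * v i = ∫ r, ∑ i ∈ s, (Ioc 0 (v i)).indicator (fun _ => w i) r := by
  rw [integral_finsetSum _ fun i _ =>
    (integrableOn_const (by simp)).integrable_indicator measurableSet_Ioc]
  refine Finset.sum_congr rfl fun i hi => ?_
  rw [integral_indicator_const _ measurableSet_Ioc, Real.volume_real_Ioc_of_le (hv i hi),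
    smul_eq_mul, sub_zero, mul_comm]

theorem sum_indicator_Ioc_of_pos (s : Finset ι) (w v : ι → ℝ) {r : ℝ} (hr : 0 < r) :
    ∑ i ∈ s, (Ioc 0 (v i)).indicator (fun _ => w i) r = ∑ i ∈ s with r ≤ v i, w i := by
  simp [Finset.sum_filter, indicator, hr]

theorem sum_mul_le_sum_mul_of_sum_filter_le {s : Finset ι} {t : Finset κ}
    {w v : ι → ℝ} {w' v' : κ → ℝ} (hv : ∀ i ∈ s, 0 ≤ v i) (hv' : ∀ j ∈ t, 0 ≤ v' j)
    (h : ∀ r > 0, ∑ i ∈ s with r ≤ v i, w i ≤ ∑ j ∈ t with r ≤ v' j, w' j) :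
    ∑ i ∈ s, w i * v i ≤ ∑ j ∈ t, w' j * v' j := by
  rw [sum_mul_eq_integral_sum_indicator_Ioc s w hv, sum_mul_eq_integral_sum_indicator_Ioc t w' hv']
  refine integral_mono (integrable_sum_indicator_Ioc s w v)
    (integrable_sum_indicator_Ioc t w' v') fun r => ?_
  rcases lt_or_ge 0 r with hr | hr
  · simpa only [sum_indicator_Ioc_of_pos _ _ _ hr] using h r hr
  · simp [indicator, not_lt.2 hr]

end LayerCake

section PiStar

variable {A : Type*} {π : A → ℝ} {S : Finset A}

theorem piStar_of_nonempty (h : S.Nonempty) : piStar π S = S.sup' h π := dif_pos h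

theorem le_piStar {c : A} (hc : c ∈ S) : π c ≤ piStar π S :=
  (piStar_of_nonempty ⟨c, hc⟩).symm ▸ S.le_sup' π hc

theorem exists_mem_piStar_eq (h : S.Nonempty) : ∃ c ∈ S, piStar π S = π c :=
  piStar_of_nonempty (π := π) h ▸ S.exists_mem_eq_sup' h π

theorem continuous_piStar (S : Finset A) : Continuous fun π : A → ℝ => piStar π S := by
  rcases S.eq_empty_or_nonempty with rfl | h
  · simpa [piStar] using continuous_const
  · simp_rw [piStar_of_nonempty h]
    exact Continuous.finset_sup'_apply h fun c _ => continuous_apply c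

end PiStar

section Gain

variable {A : Type*} [Fintype A] [DecidableEq A] {P : A → Finset A → ℝ} {μQ : Measure ℝ}
  {π : A → ℝ}

theorem gain_eq_sum_mul_expectedPosPart (a : A) :
    gain P μQ π a = ∑ A' ∈ (univ.erase a).powerset,
      P a A' * expectedPosPart μQ (piStar π A' - π a) := rfl

theorem gain_nonneg (hPnn : ∀ a A', 0 ≤ P a A') (a : A) : 0 ≤ gain P μQ π a :=
  sum_nonneg fun A' _ => mul_nonneg (hPnn a A') (expectedPosPart_nonneg μQ _)

theorem gainMin_le {S : Finset A} {b : A} (hb : b ∈ S) : gainMin P μQ π S ≤ gain P μQ π b := by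
  rw [gainMin, dif_pos ⟨b, hb⟩]
  exact S.inf'_le _ hb

theorem gainMin_nonneg (hPnn : ∀ a A', 0 ≤ P a A') (S : Finset A) : 0 ≤ gainMin P μQ π S := by
  rw [gainMin]
  split_ifs with h
  · exact S.le_inf' h _ fun b _ => gain_nonneg hPnn b
  · exact le_rfl

variable (h0 : ∀ᵐ q ∂μQ, 0 ≤ q)
include h0

theorem gain_eq_zero_of_forall_le (hPempty : ∀ a, P a ∅ = 0) {a : A} (ha : ∀ b, π b ≤ π a) :
    gain P μQ π a = 0 := by
  rw [gain_eq_sum_mul_expectedPosPart]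
  refine sum_eq_zero fun A' _ => ?_
  rcases A'.eq_empty_or_nonempty with rfl | hA'
  · rw [hPempty, zero_mul]
  · obtain ⟨c, -, hc⟩ := exists_mem_piStar_eq (π := π) hA'
    rw [expectedPosPart_eq_zero h0 (by linarith [ha c]), mul_zero]

variable [IsProbabilityMeasure μQ]

theorem gain_pos (hPnn : ∀ a A', 0 ≤ P a A') (hQ : ∀ q : ℝ, 0 < q → 0 < Qfun μQ q)
    {a c : A} (hmass : 0 < ∑ A' ∈ (univ.erase a).powerset with c ∈ A', P a A')
    (hac : π a < π c) : 0 < gain P μQ π a := by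
  have hF : 0 < expectedPosPart μQ (π c - π a) :=
    expectedPosPart_pos h0 (by linarith) (hQ _ (by linarith))
  calc 0 < (∑ A' ∈ (univ.erase a).powerset with c ∈ A', P a A') *
        expectedPosPart μQ (π c - π a) := mul_pos hmass hF
    _ = ∑ A' ∈ (univ.erase a).powerset with c ∈ A',
          P a A' * expectedPosPart μQ (π c - π a) := sum_mul ..
    _ ≤ ∑ A' ∈ (univ.erase a).powerset with c ∈ A',
          P a A' * expectedPosPart μQ (piStar π A' - π a) :=
      sum_le_sum fun A' hA' => mul_le_mul_of_nonneg_left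
        (expectedPosPart_mono h0 (by linarith [le_piStar (π := π) (mem_filter.1 hA').2]))
        (hPnn a A')
    _ ≤ gain P μQ π a :=
      sum_le_sum_of_subset_of_nonneg (filter_subset _ _) fun A' _ _ =>
        mul_nonneg (hPnn a A') (expectedPosPart_nonneg μQ _)

theorem continuous_gain (a : A) : Continuous fun π : A → ℝ => gain P μQ π a :=
  continuous_finsetSum _ fun A' _ => continuous_const.mul <|
    (lipschitzWith_expectedPosPart h0).continuous.comp
      ((continuous_piStar A').sub (continuous_apply a))

theorem continuous_gainMin (S : Finset A) : Continuous fun π : A → ℝ => gainMin P μQ π S := by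
  rcases S.eq_empty_or_nonempty with rfl | h
  · simpa [gainMin] using continuous_const
  · simp_rw [gainMin, dif_pos h]
    exact Continuous.finset_inf'_apply h fun b _ => continuous_gain h0 b

theorem sum_filter_le_expectedPosPart_piStar (hPempty : ∀ a, P a ∅ = 0) (e : A) (r : ℝ) :
    ∑ A' ∈ (univ.erase e).powerset with r ≤ expectedPosPart μQ (piStar π A' - π e), P e A' =
      ∑ A' ∈ (univ.erase e).powerset with
        (A' ∩ univ.filter fun c => r ≤ expectedPosPart μQ (π c - π e)).Nonempty, P e A' := by
  rw [sum_filter, sum_filter]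
  refine sum_congr rfl fun A' _ => ?_
  rcases A'.eq_empty_or_nonempty with rfl | hA'
  · simp [hPempty]
  obtain ⟨c₀, hc₀, hpi⟩ := exists_mem_piStar_eq (π := π) hA'
  have hiff : r ≤ expectedPosPart μQ (piStar π A' - π e) ↔
      (A' ∩ univ.filter fun c => r ≤ expectedPosPart μQ (π c - π e)).Nonempty := by
    simp only [Finset.Nonempty, mem_inter, mem_filter, mem_univ, true_and]
    refine ⟨fun h => ⟨c₀, hc₀, hpi ▸ h⟩, fun ⟨c, hc, hrc⟩ => hrc.trans ?_⟩
    exact expectedPosPart_mono h0 (by linarith [le_piStar (π := π) hc])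
  rw [if_congr hiff rfl rfl]

theorem gain_anti (hPnn : ∀ a A', 0 ≤ P a A') (hPempty : ∀ a, P a ∅ = 0)
    (hA1ii : ∀ a b : A, ∀ S : Finset A, S ⊆ univ \ {a, b} →
      ∑ A' ∈ (univ.erase a).powerset.filter (fun A' => (A' ∩ S).Nonempty), P a A'
        = ∑ A' ∈ (univ.erase b).powerset.filter (fun A' => (A' ∩ S).Nonempty), P b A')
    {a b : A} (hba : π b ≤ π a) : gain P μQ π a ≤ gain P μQ π b := by
  rw [gain_eq_sum_mul_expectedPosPart, gain_eq_sum_mul_expectedPosPart]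
  refine sum_mul_le_sum_mul_of_sum_filter_le (fun _ _ => expectedPosPart_nonneg _ _)
    (fun _ _ => expectedPosPart_nonneg _ _) fun r hr => ?_
  rw [sum_filter_le_expectedPosPart_piStar h0 hPempty, sum_filter_le_expectedPosPart_piStar h0 hPempty]
  set S := univ.filter fun c => r ≤ expectedPosPart μQ (π c - π a)
  set S' := univ.filter fun c => r ≤ expectedPosPart μQ (π c - π b)
  have hS : S ⊆ univ \ {a, b} := fun c hc => by
    have := pos_of_expectedPosPart_pos h0 (hr.trans_le (mem_filter.1 hc).2)
    simp only [mem_sdiff, mem_univ, mem_insert, mem_singleton, true_and, not_or]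
    constructor <;> rintro rfl <;> linarith
  have hSS' : S ⊆ S' := fun c hc => by
    simp only [S, S', mem_filter, mem_univ, true_and] at hc ⊢
    exact hc.trans (expectedPosPart_mono h0 (by linarith))
  rw [hA1ii a b S hS]
  exact sum_le_sum_of_subset_of_nonneg
    (monotone_filter_right _ fun A' _ => Finset.Nonempty.mono (inter_subset_inter_left hSS'))
    fun A' _ _ => hPnn b A'

end Gain

section SecondOrderGain

variable {A : Type*} [Fintype A] [DecidableEq A] {P : A → Finset A → ℝ} {μQ : Measure ℝ}
  {π : A → ℝ}

theorem gain2_nonneg_of_gain_eq_zero (hPnn : ∀ a A', 0 ≤ P a A') {a : A}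
    (ha : gain P μQ π a = 0) : 0 ≤ gain2 P μQ π a :=
  sum_nonneg fun A' _ => by
    rw [ha, sub_zero]
    exact mul_nonneg (mul_nonneg (hPnn a A') (Qfun_nonneg _)) (gainMin_nonneg hPnn A')

variable [IsProbabilityMeasure μQ] (hQ0 : ∀ q : ℝ, q < 0 → Qfun μQ q = 0)
  (hPnn : ∀ a A', 0 ≤ P a A') (hPempty : ∀ a, P a ∅ = 0)
  (hA1ii : ∀ a b : A, ∀ S : Finset A, S ⊆ univ \ {a, b} →
    ∑ A' ∈ (univ.erase a).powerset.filter (fun A' => (A' ∩ S).Nonempty), P a A'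
      = ∑ A' ∈ (univ.erase b).powerset.filter (fun A' => (A' ∩ S).Nonempty), P b A')
include hQ0 hPnn hPempty hA1ii

theorem gainMin_le_gain_of_Qfun_pos {S : Finset A} {a : A}
    (hQ : 0 < Qfun μQ (piStar π S - π a)) : gainMin P μQ π S ≤ gain P μQ π a := by
  rcases S.eq_empty_or_nonempty with rfl | hS
  · simpa [gainMin] using gain_nonneg hPnn a
  obtain ⟨c, hc, hpi⟩ := exists_mem_piStar_eq (π := π) hS
  have hac : π a ≤ π c := by
    by_contra! h
    exact hQ.ne' (hQ0 _ (by linarith))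
  exact (gainMin_le hc).trans
    (gain_anti (ae_nonneg_of_Qfun_eq_zero hQ0) hPnn hPempty hA1ii hac)

theorem gain2_eq_sum_min (a : A) :
    gain2 P μQ π a = ∑ A' ∈ (univ.erase a).powerset, P a A' *
      (Qfun μQ (piStar π A' - π a) * min (gainMin P μQ π A' - gain P μQ π a) 0) := by
  refine sum_congr rfl fun A' _ => ?_
  rw [mul_assoc]
  congr 1
  rcases (Qfun_nonneg (μ := μQ) (piStar π A' - π a)).eq_or_lt with hQ | hQ
  · rw [← hQ, zero_mul, zero_mul]
  · rw [min_eq_left (sub_nonpos.2 (gainMin_le_gain_of_Qfun_pos hQ0 hPnn hPempty hA1ii hQ))]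

theorem gain2_nonpos (a : A) : gain2 P μQ π a ≤ 0 := by
  rw [gain2_eq_sum_min hQ0 hPnn hPempty hA1ii]
  exact sum_nonpos fun A' _ => mul_nonpos_of_nonneg_of_nonpos (hPnn a A')
    (mul_nonpos_of_nonneg_of_nonpos (Qfun_nonneg _) (min_le_right _ _))

theorem lowerSemicontinuous_gain2 (a : A) :
    LowerSemicontinuous fun π : A → ℝ => gain2 P μQ π a := by
  have h0 := ae_nonneg_of_Qfun_eq_zero hQ0
  simp_rw [gain2_eq_sum_min hQ0 hPnn hPempty hA1ii, ← lowerSemicontinuousOn_univ_iff]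
  refine lowerSemicontinuousOn_sum fun A' _ => ?_
  have hQ : UpperSemicontinuous fun π : A → ℝ => Qfun μQ (piStar π A' - π a) :=
    upperSemicontinuous_Qfun.comp ((continuous_piStar A').sub (continuous_apply a))
  have hmin : Continuous fun π : A → ℝ => min (gainMin P μQ π A' - gain P μQ π a) 0 :=
    ((continuous_gainMin h0 A').sub (continuous_gain h0 a)).min continuous_const
  have hQmin := lowerSemicontinuousOn_mul_of_nonneg_of_nonpos (s := Set.univ)
    (hQ.upperSemicontinuousOn _) (hmin.lowerSemicontinuous.lowerSemicontinuousOn _)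
    (fun _ _ => Qfun_nonneg _) fun _ _ => min_le_right _ _
  exact lowerSemicontinuousOn_mul_of_nonneg_of_nonpos
    (continuous_const.upperSemicontinuous.upperSemicontinuousOn _) hQmin (fun _ _ => hPnn a A')
    fun _ _ => mul_nonpos_of_nonneg_of_nonpos (Qfun_nonneg _) (min_le_right _ _)

variable (hQ1b : ∀ q : ℝ, 0 < q → 0 < Qfun μQ q)
  (hA1i : ∀ a b : A, b ≠ a →
    0 < ∑ A' ∈ (univ.erase a).powerset.filter (fun A' => b ∈ A'), P a A')
include hQ1b hA1i

theorem gain2_neg {a c : A} (hc : ∀ b, π b ≤ π c) (hac : π a < π c) : gain2 P μQ π a < 0 := by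
  have h0 := ae_nonneg_of_Qfun_eq_zero hQ0
  have hmass := hA1i a c (by rintro rfl; exact lt_irrefl _ hac)
  obtain ⟨A'₀, hA'₀, hP⟩ : ∃ A' ∈ (univ.erase a).powerset.filter (c ∈ ·), 0 < P a A' :=
    exists_lt_of_sum_lt (by rwa [sum_const_zero])
  have hcA'₀ := (mem_filter.1 hA'₀).2
  have hQ : 0 < Qfun μQ (piStar π A'₀ - π a) :=
    hQ1b _ (by linarith [le_piStar (π := π) hcA'₀])
  have hgain : gainMin P μQ π A'₀ - gain P μQ π a < 0 := by
    have hmin := gainMin_le (P := P) (μQ := μQ) (π := π) hcA'₀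
    rw [gain_eq_zero_of_forall_le h0 hPempty hc] at hmin
    linarith [gain_pos h0 hPnn hQ1b hmass hac]
  rw [gain2_eq_sum_min hQ0 hPnn hPempty hA1ii]
  refine (sum_lt_sum (g := fun _ => 0) (fun A' _ => mul_nonpos_of_nonneg_of_nonpos (hPnn a A')
    (mul_nonpos_of_nonneg_of_nonpos (Qfun_nonneg _) (min_le_right _ _)))
    ⟨A'₀, (mem_filter.1 hA'₀).1, ?_⟩).trans_eq sum_const_zero
  exact mul_neg_of_pos_of_neg hP (mul_neg_of_pos_of_neg hQ (min_lt_iff.2 (Or.inl hgain)))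

theorem gain2_eq_zero_iff (a : A) : gain2 P μQ π a = 0 ↔ ∀ b, π b ≤ π a := by
  refine ⟨fun h b => ?_, fun ha => (gain2_nonpos hQ0 hPnn hPempty hA1ii a).antisymm
    (gain2_nonneg_of_gain_eq_zero hPnn
      (gain_eq_zero_of_forall_le (ae_nonneg_of_Qfun_eq_zero hQ0) hPempty ha))⟩
  obtain ⟨c, -, hc⟩ := univ.exists_max_image π ⟨a, mem_univ a⟩
  by_contra! hab
  exact (gain2_neg hQ0 hPnn hPempty hA1ii hQ1b hA1i (fun b => hc b (mem_univ b))
    (hab.trans_le (hc b (mem_univ b)))).ne h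

end SecondOrderGain

theorem stmt7_general {A : Type*} [Fintype A] [DecidableEq A] [Nonempty A]
    (P : A → Finset A → ℝ) (μQ : Measure ℝ) [IsProbabilityMeasure μQ]
    (hPnn : ∀ a A', 0 ≤ P a A')
    (hPempty : ∀ a, P a (∅ : Finset A) = 0)
    -- Assumption Q1
    (hQ1a : ∀ q : ℝ, q < 0 → Qfun μQ q = 0)
    (hQ1b : ∀ q : ℝ, 0 < q → 0 < Qfun μQ q)
    -- Assumption A1-i
    (hA1i : ∀ a b : A, b ≠ a →
      0 < ∑ A' ∈ (Finset.univ.erase a).powerset.filter (fun A' => b ∈ A'), P a A')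
    -- Assumption A1-ii
    (hA1ii : ∀ a b : A, ∀ S : Finset A, S ⊆ Finset.univ \ {a, b} →
      ∑ A' ∈ (Finset.univ.erase a).powerset.filter (fun A' => (A' ∩ S).Nonempty), P a A'
        = ∑ A' ∈ (Finset.univ.erase b).powerset.filter (fun A' => (A' ∩ S).Nonempty), P b A') :
    -- (a) `H` is lower semicontinuous on `Δ^𝒜 × ℝ^𝒜`
    LowerSemicontinuousOn
        (fun p : (A → ℝ) × (A → ℝ) => Hagg P μQ p.1 p.2)
        ((stdSimplex ℝ A) ×ˢ (Set.univ : Set (A → ℝ))) ∧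
    -- (b) `H(x)[π] ≤ 0`
    (∀ x ∈ stdSimplex ℝ A, ∀ π : A → ℝ, Hagg P μQ x π ≤ 0) ∧
    -- (c) `H(x)[π] = 0` iff every used action is optimal
    (∀ x ∈ stdSimplex ℝ A, ∀ π : A → ℝ,
      (Hagg P μQ x π = 0 ↔
        ∀ a : A, 0 < x a → π a = Finset.univ.sup' Finset.univ_nonempty π)) := by
  have hgain2 : ∀ π a, gain2 P μQ π a ≤ 0 := fun _ => gain2_nonpos hQ1a hPnn hPempty hA1ii
  have hterm : ∀ x ∈ stdSimplex ℝ A, ∀ π a, x a * gain2 P μQ π a ≤ 0 := fun x hx π a =>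
    mul_nonpos_of_nonneg_of_nonpos (hx.1 a) (hgain2 π a)
  refine ⟨?_, fun x hx π => sum_nonpos fun a _ => hterm x hx π a, fun x hx π => ?_⟩
  · have hlsc (a : A) : LowerSemicontinuous fun p : (A → ℝ) × (A → ℝ) => gain2 P μQ p.2 a :=
      (lowerSemicontinuous_gain2 hQ1a hPnn hPempty hA1ii a).comp continuous_snd
    exact lowerSemicontinuousOn_sum fun a _ => lowerSemicontinuousOn_mul_of_nonneg_of_nonpos
      (((continuous_apply a).comp continuous_fst).upperSemicontinuous.upperSemicontinuousOn _)
      ((hlsc a).lowerSemicontinuousOn _) (fun p hp => hp.1.1 a) fun p _ => hgain2 p.2 a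
  · have hmax : ∀ a, (∀ b, π b ≤ π a) ↔ π a = univ.sup' univ_nonempty π := fun a =>
      ⟨fun h => (le_sup' π (mem_univ a)).antisymm (sup'_le _ _ fun b _ => h b),
        fun h b => h ▸ le_sup' π (mem_univ b)⟩
    rw [Hagg, sum_eq_zero_iff_of_nonpos fun a _ => hterm x hx π a]
    simp only [mem_univ, true_implies, mul_eq_zero,
      gain2_eq_zero_iff hQ1a hPnn hPempty hA1ii hQ1b hA1i, hmax]
    exact forall_congr' fun a => by
      rw [(hx.1 a).lt_iff_ne', or_iff_not_imp_left]

theorem stmt7 {A : Type*} [Fintype A] [DecidableEq A] [Nonempty A]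
    (P : A → Finset A → ℝ) (μQ : Measure ℝ) [IsProbabilityMeasure μQ]
    (hPnn : ∀ a A', 0 ≤ P a A')
    (hPsupp : ∀ a A', ¬ A' ⊆ Finset.univ.erase a → P a A' = 0)
    (hPempty : ∀ a, P a (∅ : Finset A) = 0)
    (hPsum : ∀ a, ∑ A' ∈ (Finset.univ.erase a).powerset, P a A' = 1)
    -- Assumption Q1
    (hQ1a : ∀ q : ℝ, q < 0 → Qfun μQ q = 0)
    (hQ1b : ∀ q : ℝ, 0 < q → 0 < Qfun μQ q)
    -- Assumption A1-i
    (hA1i : ∀ a b : A, b ≠ a →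
      0 < ∑ A' ∈ (Finset.univ.erase a).powerset.filter (fun A' => b ∈ A'), P a A')
    -- Assumption A1-ii
    (hA1ii : ∀ a b : A, ∀ S : Finset A, S ⊆ Finset.univ \ {a, b} →
      ∑ A' ∈ (Finset.univ.erase a).powerset.filter (fun A' => (A' ∩ S).Nonempty), P a A'
        = ∑ A' ∈ (Finset.univ.erase b).powerset.filter (fun A' => (A' ∩ S).Nonempty), P b A') :
    -- (a) `H` is lower semicontinuous on `Δ^𝒜 × ℝ^𝒜`
    LowerSemicontinuousOn
        (fun p : (A → ℝ) × (A → ℝ) => Hagg P μQ p.1 p.2)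
        ((stdSimplex ℝ A) ×ˢ (Set.univ : Set (A → ℝ))) ∧
    -- (b) `H(x)[π] ≤ 0`
    (∀ x ∈ stdSimplex ℝ A, ∀ π : A → ℝ, Hagg P μQ x π ≤ 0) ∧
    -- (c) `H(x)[π] = 0` iff every used action is optimal
    (∀ x ∈ stdSimplex ℝ A, ∀ π : A → ℝ,
      (Hagg P μQ x π = 0 ↔
        ∀ a : A, 0 < x a → π a = Finset.univ.sup' Finset.univ_nonempty π)) :=
  stmt7_general P μQ hPnn hPempty hQ1a hQ1b hA1i hA1ii
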